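/- arXiv:math/0509394 — 5 statements merged into one kernel-verified Lean document; each statement's English description precedes it below -/
import Mathlib

section
/- With L_1 the ℤ[q^{±1}]-linear map on ℤ[q^{±1}][x^{±1}] sending x^a ↦ q^{-a^2}, one has L_1((x;q)_{k+1}(x^{-1};q)_{k+1}) = 2(-1)^{k+1} q^{-(k+1)(k+2)/2} (q^{k+1};q)_{k+1}. -/
open Finset LaurentPolynomial

noncomputable section

/-- `ℤ[q^{±1}]`. -/
abbrev Lq : Type := LaurentPolynomial ℤ

/-- `ℤ[q^{±1}][x^{±1}]`. -/
abbrev Lqx : Type := LaurentPolynomial Lq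

/-- The Laplace transform: the `ℤ[q^{±1}]`-linear map on `ℤ[q^{±1}][x^{±1}]`
sending `x^a ↦ e a`. -/
def laplace (e : ℤ → Lq) (F : Lqx) : Lq :=
  Finsupp.sum F.coeff fun a c => c * e a

/-- `F_k(x,q) = (x;q)_{k+1} (x^{-1};q)_{k+1}` in `ℤ[q^{±1}][x^{±1}]`. -/
def Fk (k : ℕ) : Lqx :=
  (∏ i ∈ range (k + 1), (1 - C ((T 1 : Lq) ^ i) * T 1)) *
    ∏ i ∈ range (k + 1), (1 - C ((T 1 : Lq) ^ i) * T (-1))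

/-! ### Auxiliary machinery -/

lemma laplace_single (e : ℤ → Lq) (a : ℤ) (c : Lq) :
    laplace e (AddMonoidAlgebra.single a c) = c * e a :=
  Finsupp.sum_single_index (zero_mul _)

lemma laplace_CT (e : ℤ → Lq) (c : Lq) (a : ℤ) :
    laplace e (C c * T a) = c * e a := by
  rw [← single_eq_C_mul_T, laplace_single]

lemma laplace_add (e : ℤ → Lq) (F G : Lqx) :
    laplace e (F + G) = laplace e F + laplace e G :=
  Finsupp.sum_add_index' (fun _ => zero_mul _) (fun _ _ _ => add_mul _ _ _)

lemma laplace_C_mul (e : ℤ → Lq) (c : Lq) (F : Lqx) :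
    laplace e (C c * F) = c * laplace e F := by
  induction F using LaurentPolynomial.induction_on' with
  | add p r hp hr => rw [mul_add, laplace_add, laplace_add, hp, hr, mul_add]
  | C_mul_T n a => rw [← mul_assoc, ← map_mul, laplace_CT, laplace_CT, mul_assoc]

lemma laplace_sub (e : ℤ → Lq) (F G : Lqx) :
    laplace e (F - G) = laplace e F - laplace e G := by
  have h := laplace_add e G (F - G)
  rw [add_sub_cancel] at h
  rw [h]; ring

/-- The substitution `x ↦ q² x` as a ring homomorphism. -/
def subq : Lqx →+* Lqx :=
  AddMonoidAlgebra.liftNCRingHom (C : Lq →+* Lqx)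
    { toFun := fun a => C (T (2 * a.toAdd)) * T a.toAdd
      map_one' := by simp [T_zero]
      map_mul' := by
        intro a b
        simp only [toAdd_mul]
        rw [mul_add, T_add, T_add, map_mul]
        ring }
    (fun _ _ => Commute.all _ _)

lemma subq_CT (c : Lq) (a : ℤ) :
    subq (C c * T a) = C c * (C (T (2 * a)) * T a) := by
  rw [← single_eq_C_mul_T]
  exact AddMonoidAlgebra.liftNC_single _ _ a c

lemma subq_C (c : Lq) : subq (C c) = C c := by
  have h := subq_CT c 0
  simpa [T_zero] using h

lemma subq_T (a : ℤ) : subq (T a) = C (T (2 * a)) * T a := by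
  have h := subq_CT 1 a
  simpa using h

/-- The kernel property of the Laplace transform `x^a ↦ q^{-a²}`. -/
lemma laplace_kill (F : Lqx) :
    laplace (fun a => T (-a ^ 2)) (C (T 1) * T 1 * subq F)
      = laplace (fun a => T (-a ^ 2)) F := by
  induction F using LaurentPolynomial.induction_on' with
  | add p r hp hr => rw [map_add, mul_add, laplace_add, laplace_add, hp, hr]
  | C_mul_T n a =>
      rw [subq_CT, laplace_CT]
      have h1 : (C (T 1) : Lqx) * T 1 * (C a * (C (T (2 * n)) * T n))
          = C (T 1 * (a * T (2 * n))) * T (1 + n) := by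
        rw [map_mul, map_mul, T_add]; ring
      rw [h1, laplace_CT]
      have hexp : (T 1 : Lq) * (a * T (2 * n)) * T (-(1 + n) ^ 2) = a * T (-n ^ 2) := by
        rw [mul_comm (T 1), mul_assoc, mul_assoc, ← T_add, ← T_add]
        congr 2
        ring
      rw [hexp]

/-- `f_j = 1 - q^j x^{-1}`. -/
def fx (j : ℤ) : Lqx := 1 - C (T j) * T (-1)

/-- `R_{a,l} = ∏_{j=a}^{a+l-1} (1 - q^j x^{-1})`. -/
def Rf (a : ℤ) (l : ℕ) : Lqx := ∏ i ∈ range l, fx (a + i)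

def sk (k : ℕ) : ℤ := ∑ i ∈ range (k + 1), (i : ℤ)

lemma Rf_zero (a : ℤ) : Rf a 0 = 1 := by simp [Rf]

lemma Rf_succ_last (a : ℤ) (l : ℕ) : Rf a (l + 1) = Rf a l * fx (a + l) := by
  rw [Rf, prod_range_succ]; rfl

lemma Rf_succ_first (a : ℤ) (l : ℕ) : Rf a (l + 1) = fx a * Rf (a + 1) l := by
  rw [Rf, prod_range_succ', mul_comm]
  refine congr_arg₂ (· * ·) ?_ ?_
  · congr 1; simp
  · exact prod_congr rfl fun i _ => by congr 1; push_cast; ring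

lemma Rf_add (a : ℤ) (l m : ℕ) : Rf a (l + m) = Rf a l * Rf (a + l) m := by
  rw [Rf, prod_range_add]
  refine congr_arg₂ (· * ·) rfl ?_
  exact prod_congr rfl fun i _ => by congr 1; push_cast; ring

lemma Rf_shift (a : ℤ) (l : ℕ) :
    Rf (a - 2) l * fx (a + l - 2) * fx (a + l - 1) = fx (a - 2) * fx (a - 1) * Rf a l := by
  have h1 : Rf (a - 2) (l + 1 + 1) = Rf (a - 2) l * fx (a + l - 2) * fx (a + l - 1) := by
    rw [Rf_succ_last, Rf_succ_last]
    push_cast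
    ring_nf
  have h2 : Rf (a - 2) (l + 1 + 1) = fx (a - 2) * fx (a - 1) * Rf a l := by
    rw [show l + 1 + 1 = 1 + 1 + l by ring, Rf_add, Rf_succ_first, Rf_succ_first, Rf_zero]
    have e1 : a - 2 + 1 = a - 1 := by ring
    have e3 : a - 2 + ((1:ℕ) + 1 : ℕ) = a := by push_cast; ring
    rw [e1, e3]
    ring
  rw [← h1, h2]

lemma hX1 : (T 1 : Lqx) * T (-1) = 1 := by rw [← T_add]; norm_num

lemma hb1 (m : ℤ) : (C (T m : Lq) : Lqx) * C (T (-m) : Lq) = 1 := by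
  rw [← map_mul, ← T_add]; norm_num

lemma subq_fx (j : ℤ) : subq (fx j) = fx (j - 2) := by
  rw [fx, map_sub, map_one, subq_CT, fx, T_sub, map_mul]
  norm_num
  ring

lemma subq_Rf (a : ℤ) (l : ℕ) : subq (Rf a l) = Rf (a - 2) l := by
  rw [Rf, Rf, map_prod]
  refine prod_congr rfl fun i _ => ?_
  rw [subq_fx, show a + (i:ℤ) - 2 = a - 2 + i by ring]

lemma prodA (k : ℕ) :
    ∏ i ∈ range (k + 1), (1 - C ((T 1 : Lq) ^ i) * T 1)
      = (-1) ^ (k + 1) * C (T (sk k) : Lq) * T ((k : ℤ) + 1) * Rf (-(k : ℤ)) (k + 1) := by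
  induction k with
  | zero =>
      rw [prod_range_one]
      have h1 : Rf (-(0:ℕ):ℤ) 1 = fx 0 := by
        rw [show (1:ℕ) = 0 + 1 from rfl, Rf_succ_first, Rf_zero]
        norm_num
      have h2 : sk 0 = 0 := by simp [sk]
      rw [h1, h2]
      simp only [pow_zero, pow_one, map_one, one_mul, T_zero, fx, Nat.cast_zero]
      norm_num
      linear_combination (-1 : Lqx) * hX1
  | succ k ih =>
      rw [prod_range_succ, ih]
      have hsk : (T (sk (k+1)) : Lq) = T (sk k) * T ((k:ℤ) + 1) := by
        rw [← T_add]
        congr 1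
        rw [sk, sk, sum_range_succ]
        push_cast; ring
      have hT1 : ((T 1 : Lq) ^ (k + 1)) = T ((k:ℤ) + 1) := by
        rw [T_pow]; congr 1; push_cast; ring
      have hc : (-((k:ℕ)+1:ℕ):ℤ) = -((k:ℤ)+1) := by push_cast; ring
      have hRf : Rf (-((k:ℕ)+1:ℕ):ℤ) (k + 1 + 1)
          = (1 - C (T (-((k:ℤ)+1)) : Lq) * T (-1)) * Rf (-(k : ℤ)) (k + 1) := by
        rw [hc, Rf_succ_first]
        have h5 : -((k:ℤ)+1) + 1 = -(k:ℤ) := by ring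
        rw [h5, fx]
      have hT2 : (T (((k:ℕ)+1:ℕ) + (1:ℤ)) : Lqx) = T ((k:ℤ)+1) * T 1 := by
        rw [← T_add, show (((k:ℕ)+1:ℕ) + (1:ℤ)) = ((k:ℤ)+1) + 1 by push_cast; ring]
      rw [hsk, hT1, hRf, hT2, map_mul]
      have hb := hb1 ((k:ℤ)+1)
      linear_combination (-((-1:Lqx)^(k+1) * C (T (sk k) : Lq) * T ((k:ℤ)+1)
            * Rf (-(k:ℤ)) (k+1) * T 1 * T (-1))) * hb
        - ((-1:Lqx)^(k+1) * C (T (sk k) : Lq) * T ((k:ℤ)+1) * Rf (-(k:ℤ)) (k+1)) * hX1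

lemma prodB (k : ℕ) :
    ∏ i ∈ range (k + 1), (1 - C ((T 1 : Lq) ^ i) * T (-1)) = Rf 0 (k + 1) := by
  rw [Rf]
  refine prod_congr rfl fun i _ => ?_
  rw [fx, T_pow, show ((i:ℤ) * 1) = 0 + (i:ℤ) by ring]

lemma Fk_eq (k : ℕ) :
    Fk k = (-1) ^ (k + 1) * C (T (sk k) : Lq) * T ((k : ℤ) + 1)
      * fx 0 * fx (-(k : ℤ)) * Rf (1 - (k : ℤ)) (2 * k) := by
  rw [Fk, prodA, prodB]
  have h1 : Rf (-(k : ℤ)) (k + 1) = Rf (-(k:ℤ)) k * fx 0 := by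
    rw [Rf_succ_last]
    have h : -(k:ℤ) + (k:ℕ) = 0 := by push_cast; ring
    rw [h]
  have h2 : Rf (-(k:ℤ)) k * Rf 0 (k + 1) = Rf (-(k:ℤ)) (2 * k + 1) := by
    rw [show 2 * k + 1 = k + (k + 1) by ring, Rf_add (-(k:ℤ)) k (k+1)]
    have h : -(k:ℤ) + (k:ℕ) = 0 := by push_cast; ring
    rw [h]
  have h3 : Rf (-(k:ℤ)) (2 * k + 1) = fx (-(k:ℤ)) * Rf (1 - (k:ℤ)) (2 * k) := by
    rw [Rf_succ_first]
    have h : -(k:ℤ) + 1 = 1 - (k:ℤ) := by ring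
    rw [h]
  calc ((-1:Lqx)) ^ (k + 1) * C (T (sk k) : Lq) * T ((k : ℤ) + 1) * Rf (-(k : ℤ)) (k+1)
        * Rf 0 (k+1)
      = (-1) ^ (k + 1) * C (T (sk k) : Lq) * T ((k : ℤ) + 1) * fx 0
          * (Rf (-(k:ℤ)) k * Rf 0 (k + 1)) := by rw [h1]; ring
    _ = _ := by rw [h2, h3]; ring

/-- The coefficient `c_k = q^{-(k+2)} (1+q^{k+1})(1-q^{2k+3})`. -/
def cK (k : ℕ) : Lq :=
  (T (-((k:ℤ)+1)) * T (-1)) * (1 + T ((k:ℤ)+1)) * (1 - T ((k:ℤ)+1) * T ((k:ℤ)+1) * T 1)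

/-- The telescoping certificate. -/
def Gc (k : ℕ) : Lqx :=
  (-1)^(k+1) * C (T (sk k) : Lq) * (C (T (-((k:ℤ)+1)) : Lq) * C (T (-1) : Lq))
    * T ((k:ℤ)+1)
    * (1 - C (T ((k:ℤ)+1) : Lq) * T (-1))
    * (1 - C (T ((k:ℤ)+1) : Lq) * C (T 1 : Lq) * T (-1))
    * fx (-(k:ℤ)) * Rf (1 - (k:ℤ)) (2*k)

lemma key {A : Type*} [CommRing A] (b b' u v X Y : A)
    (hb : b * b' = 1) (hu : u * v = 1) (hX : X * Y = 1) :
    -(b*X*(1-Y)*(1-b'*Y)*(1-b*Y)) + (b'*v)*(1+b)*(1-b*b*u)*(1-Y)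
      = b'*v*(1-b*Y)*(1-b*u*Y) - b*X*(1-b'*v*Y)*(1-b'*Y) := by
  linear_combination
    (-(X*Y^2) + v - v*X*Y + u*v*Y + b'*v*X*Y^2 - b*X*Y^2 + b*X*Y^3 - b*u*v + b*u*v*Y
      - b*u*v*Y^2 - b^2*u*v + b^2*u*v*Y) * hb
    + (Y - b + b*Y - b*Y^2 - b^2 + b^2*Y) * hu
    + (-Y - v + b'*v*Y + b - b*Y + b*Y^2 + b^2 - b^2*Y) * hX

lemma qx_subq_Gc (k : ℕ) :
    C (T 1 : Lq) * T 1 * subq (Gc k)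
      = (-1)^(k+1) * C (T (sk k) : Lq) * C (T ((k:ℤ)+1) : Lq) * (T ((k:ℤ)+1) * T 1)
        * (1 - C (T (-((k:ℤ)+1)) : Lq) * C (T (-1) : Lq) * T (-1))
        * (1 - C (T (-((k:ℤ)+1)) : Lq) * T (-1))
        * fx (-(k:ℤ)) * Rf (1 - (k:ℤ)) (2*k) := by
  have hs := Rf_shift (1 - (k:ℤ)) (2*k)
  have e1 : 1 - (k:ℤ) - 2 = -(k:ℤ) - 1 := by ring
  have e2 : 1 - (k:ℤ) + ((2*k:ℕ):ℤ) - 2 = (k:ℤ) - 1 := by push_cast; ring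
  have e3 : 1 - (k:ℤ) + ((2*k:ℕ):ℤ) - 1 = (k:ℤ) := by push_cast; ring
  have e4 : 1 - (k:ℤ) - 1 = -(k:ℤ) := by ring
  rw [e1, e2, e3, e4] at hs
  have hfx1 : fx ((k:ℤ) - 1)
      = 1 - C (T ((k:ℤ)+1) : Lq) * (C (T (-1) : Lq) * C (T (-1) : Lq) * T (-1)) := by
    rw [fx, show ((k:ℤ) - 1) = ((k:ℤ)+1) + -1 + -1 by ring, T_add, T_add, map_mul, map_mul]
    ring
  have hfx2 : fx ((k:ℤ))
      = 1 - C (T ((k:ℤ)+1) : Lq) * C (T 1 : Lq) * (C (T (-1) : Lq) * C (T (-1) : Lq) * T (-1)) := by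
    rw [fx, show ((k:ℤ)) = ((k:ℤ)+1) + 1 + -1 + -1 by ring, T_add, T_add, T_add,
      map_mul, map_mul, map_mul]
    ring
  have hfx3 : fx (-(k:ℤ) - 1)
      = 1 - C (T (-((k:ℤ)+1)) : Lq) * T (-1) := by
    rw [fx, show (-(k:ℤ) - 1) = -((k:ℤ)+1) by ring]
  rw [hfx1, hfx2, hfx3] at hs
  -- hs : Rf (-k-1) (2k) * F1 * F2 = G2 * N * K
  have hfx4 : fx (-(k:ℤ) - 2)
      = 1 - C (T (-((k:ℤ)+1)) : Lq) * C (T (-1) : Lq) * T (-1) := by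
    rw [fx, show (-(k:ℤ) - 2) = -((k:ℤ)+1) + -1 by ring, T_add, map_mul]
  have hq1 : (C (T (2 * ((k:ℤ)+1)) : Lq) : Lqx)
      = C (T ((k:ℤ)+1) : Lq) * C (T ((k:ℤ)+1) : Lq) := by
    rw [← map_mul, ← T_add]; congr 2; ring
  have hu2 : (C (T (2 * (-1):ℤ) : Lq) : Lqx) = C (T (-1) : Lq) * C (T (-1) : Lq) := by
    rw [← map_mul, ← T_add]; norm_num
  have hbk := hb1 ((k:ℤ)+1)
  have hv1 := hb1 (1:ℤ)
  rw [Gc]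
  simp only [map_mul, map_sub, map_one, map_pow, map_neg, subq_C, subq_T, subq_fx, subq_Rf]
  rw [e1, hfx4, hq1, hu2]
  linear_combination
    ((-1:Lqx))^(k+1) * C (T (sk k) : Lq) * C (T (-((k:ℤ)+1)) : Lq) * C (T (-1) : Lq)
      * C (T ((k:ℤ)+1) : Lq) * C (T ((k:ℤ)+1) : Lq) * T ((k:ℤ)+1)
      * (1 - C (T (-((k:ℤ)+1)) : Lq) * C (T (-1) : Lq) * T (-1))
      * C (T 1 : Lq) * T 1 * hs
    + ((-1:Lqx))^(k+1) * C (T (sk k) : Lq) * T ((k:ℤ)+1)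
      * (1 - C (T (-((k:ℤ)+1)) : Lq) * C (T (-1) : Lq) * T (-1))
      * (1 - C (T (-((k:ℤ)+1)) : Lq) * T (-1))
      * fx (-(k:ℤ)) * Rf (1-(k:ℤ)) (2*k) * C (T ((k:ℤ)+1) : Lq) * T 1
      * C (T 1 : Lq) * C (T (-1) : Lq) * hbk
    + ((-1:Lqx))^(k+1) * C (T (sk k) : Lq) * T ((k:ℤ)+1)
      * (1 - C (T (-((k:ℤ)+1)) : Lq) * C (T (-1) : Lq) * T (-1))
      * (1 - C (T (-((k:ℤ)+1)) : Lq) * T (-1))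
      * fx (-(k:ℤ)) * Rf (1-(k:ℤ)) (2*k) * C (T ((k:ℤ)+1) : Lq) * T 1 * hv1

lemma hsk1 (k : ℕ) : (T (sk (k+1)) : Lq) = T (sk k) * T ((k:ℤ) + 1) := by
  rw [← T_add]
  congr 1
  rw [sk, sk, sum_range_succ]
  push_cast; ring

lemma hfx0 : fx 0 = 1 - (T (-1) : Lqx) := by
  rw [fx, T_zero, map_one, one_mul]

lemma step (k : ℕ) :
    Fk (k+1) + C (cK k) * Fk k = Gc k - C (T 1 : Lq) * T 1 * subq (Gc k) := by
  have hFk1 := Fk_eq (k+1)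
  rw [hsk1, show ((((k+1):ℕ):ℤ) + 1) = ((k:ℤ)+1) + 1 by push_cast; ring,
    T_add ((k:ℤ)+1) 1, show (-(((k+1):ℕ):ℤ)) = -((k:ℤ)+1) by push_cast; ring,
    show (1 - (((k+1):ℕ):ℤ)) = -(k:ℤ) by push_cast; ring,
    show 2*(k+1) = 2*k+1+1 by ring, Rf_succ_last, Rf_succ_first,
    show (-(k:ℤ) + 1) = 1 - (k:ℤ) by ring,
    show (-(k:ℤ) + ((2*k+1:ℕ):ℤ)) = (k:ℤ)+1 by push_cast; ring] at hFk1
  rw [map_mul] at hFk1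
  rw [hFk1, Fk_eq k, qx_subq_Gc, Gc, hfx0, cK]
  simp only [map_mul, map_add, map_sub, map_one]
  have hfxb : fx ((k:ℤ)+1) = 1 - C (T ((k:ℤ)+1) : Lq) * T (-1) := rfl
  have hfxc : fx (-((k:ℤ)+1)) = 1 - C (T (-((k:ℤ)+1)) : Lq) * T (-1) := rfl
  rw [hfxb, hfxc]
  have hbk := hb1 ((k:ℤ)+1)
  have hv1 := hb1 (1:ℤ)
  linear_combination ((-1:Lqx))^(k+1) * C (T (sk k) : Lq) * T ((k:ℤ)+1)
      * fx (-(k:ℤ)) * Rf (1-(k:ℤ)) (2*k)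
    * key (C (T ((k:ℤ)+1) : Lq) : Lqx) (C (T (-((k:ℤ)+1)) : Lq)) (C (T 1 : Lq))
        (C (T (-1) : Lq)) (T 1) (T (-1)) hbk hv1 hX1

lemma laplace_zero (e : ℤ → Lq) : laplace e 0 = 0 :=
  Finsupp.sum_zero_index

lemma laplace_neg (e : ℤ → Lq) (F : Lqx) : laplace e (-F) = -laplace e F := by
  have h := laplace_add e F (-F)
  rw [add_neg_cancel, laplace_zero] at h
  linear_combination -h

lemma hTu (m : ℤ) : (T m : Lq) * T (-m) = 1 := by
  rw [← T_add]; norm_num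

/-- The closed form. -/
def RHSq (k : ℕ) : Lq :=
  2 * (-1) ^ (k + 1) * T (-(((k : ℤ) + 1) * ((k : ℤ) + 2) / 2)) *
    ∏ i ∈ range (k + 1), (1 - (T ((k : ℤ) + 1 + (i : ℤ)) : Lq))

lemma laplace_Fk_succ (k : ℕ) :
    laplace (fun a => T (-a ^ 2)) (Fk (k + 1))
      = -(cK k) * laplace (fun a => T (-a ^ 2)) (Fk k) := by
  have h := step k
  have h2 : Fk (k+1) = -(C (cK k) * Fk k)
      + (Gc k - C (T 1 : Lq) * T 1 * subq (Gc k)) := by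
    linear_combination h
  rw [h2, laplace_add, laplace_neg, laplace_C_mul, laplace_sub, laplace_kill]
  ring

lemma RHSq_succ (k : ℕ) : RHSq (k + 1) = -(cK k) * RHSq k := by
  obtain ⟨c, hc⟩ : Even (((k:ℤ)+1) * (((k:ℤ)+1)+1)) := Int.even_mul_succ_self _
  have h1 : ((k:ℤ)+1)*((k:ℤ)+2) = 2*c := by linear_combination hc
  have h2 : ((k:ℤ)+2)*((k:ℤ)+3) = 2*(c + (k:ℤ) + 2) := by linear_combination hc
  have hEk : ((k:ℤ)+1)*((k:ℤ)+2)/2 = c := by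
    rw [h1]; exact Int.mul_ediv_cancel_left c two_ne_zero
  have hEk1 : ((((k+1):ℕ):ℤ)+1)*((((k+1):ℕ):ℤ)+2)/2 = c + (k:ℤ) + 2 := by
    push_cast
    rw [show ((k:ℤ)+1+1) = (k:ℤ)+2 by ring, show ((k:ℤ)+1+2) = (k:ℤ)+3 by ring, h2]
    exact Int.mul_ediv_cancel_left _ two_ne_zero
  have hP1 : ∏ i ∈ range (k+1+1), (1 - (T ((((k+1):ℕ):ℤ) + 1 + (i : ℤ)) : Lq))
      = (∏ i ∈ range k, (1 - (T ((k:ℤ) + 2 + (i : ℤ)) : Lq)))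
        * (1 - T ((k:ℤ)+1) * T ((k:ℤ)+1)) * (1 - T ((k:ℤ)+1) * T ((k:ℤ)+1) * T 1) := by
    rw [prod_range_succ, prod_range_succ,
      show ((((k+1):ℕ):ℤ) + 1 + (((k+1):ℕ):ℤ)) = (((k:ℤ)+1) + ((k:ℤ)+1)) + 1
        by push_cast; ring,
      T_add (((k:ℤ)+1) + ((k:ℤ)+1)) 1,
      show ((((k+1):ℕ):ℤ) + 1 + ((k:ℕ):ℤ)) = ((k:ℤ)+1) + ((k:ℤ)+1) by push_cast; ring,
      T_add ((k:ℤ)+1) ((k:ℤ)+1)]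
    refine congr_arg₂ _ (congr_arg₂ _ ?_ rfl) rfl
    refine prod_congr rfl fun i _ => ?_
    have h : ((((k+1):ℕ):ℤ) + 1 + (i:ℤ)) = ((k:ℤ) + 2 + (i:ℤ)) := by push_cast; ring
    rw [h]
  have hP2 : ∏ i ∈ range (k+1), (1 - (T ((k:ℤ) + 1 + (i : ℤ)) : Lq))
      = (1 - T ((k:ℤ)+1)) * ∏ i ∈ range k, (1 - (T ((k:ℤ) + 2 + (i : ℤ)) : Lq)) := by
    rw [prod_range_succ', mul_comm, show ((k:ℤ) + 1 + ((0:ℕ):ℤ)) = (k:ℤ)+1 by push_cast; ring]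
    congr 1
    refine prod_congr rfl fun i _ => ?_
    have h : ((k:ℤ) + 1 + ((i+1:ℕ):ℤ)) = ((k:ℤ) + 2 + (i:ℤ)) := by push_cast; ring
    rw [h]
  have hT3 : (T (-(((((k+1):ℕ):ℤ)+1)*((((k+1):ℕ):ℤ)+2)/2)) : Lq)
      = T (-c) * T (-((k:ℤ)+1)) * T (-1) := by
    rw [hEk1, ← T_add, ← T_add]; congr 1; ring
  rw [RHSq, RHSq, hP1, hP2, hT3, hEk, cK]
  ring

theorem laplace_one_Fk' (k : ℕ) :
    laplace (fun a => T (-a ^ 2)) (Fk k) = RHSq k := by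
  induction k with
  | zero =>
      have hF0 : Fk 0 = C (2:Lq) * T 0 + (C (-1:Lq) * T 1 + C (-1:Lq) * T (-1)) := by
        rw [Fk, prod_range_one, prod_range_one]
        simp only [pow_zero, map_one, one_mul, T_zero, mul_one, map_neg, map_ofNat]
        linear_combination hX1
      rw [hF0, laplace_add, laplace_add, laplace_CT, laplace_CT, laplace_CT, RHSq,
        prod_range_one]
      norm_num
      linear_combination (-2 : Lq) * hTu 1
  | succ k ih => rw [laplace_Fk_succ, ih, RHSq_succ]

/-- Lemma 2.2, eq. (5): `L_1(F_k) = 2 (-1)^{k+1} q^{-(k+1)(k+2)/2} (q^{k+1};q)_{k+1}`,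
where `L_1` sends `x^a ↦ q^{-a^2}`. -/
theorem laplace_one_Fk (k : ℕ) :
    laplace (fun a => T (-a ^ 2)) (Fk k)
      = 2 * (-1) ^ (k + 1) * T (-(((k : ℤ) + 1) * ((k : ℤ) + 2) / 2)) *
          ∏ i ∈ range (k + 1), (1 - (T ((k : ℤ) + 1 + (i : ℤ)) : Lq)) := by
  rw [laplace_one_Fk', RHSq]

end
end

section
/- For integers n ≥ 1 and 0 ≤ k ≤ n-1, the change of basis from Chebyshev-type basis holds: e_{n-1} = ∑_{k=0}^{n-1} (-1)^{n-1-k} · qbinom([n+k],[n-1-k]) · R_k, where the quantum binomial [a;b] = [a]!/([b]![a-b]!), [i] = (v^i - v^{-i})/(v - v^{-1}), R_k(z) = ∏_{i=0}^{k-1}(z - λ_{2i}) with λ_i = -v^{i+1} - v^{-i-1}, and e_m(z) are the Chebyshev polynomials satisfying e_0 = 1, e_1 = z, z·e_m = e_{m+1} + e_{m-1}, all as polynomials in z over ℚ(v). -/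
open Finset Polynomial

noncomputable section

/-- The field `ℚ(v)`. -/
abbrev Fv : Type := RatFunc ℚ

/-- The variable `v`. -/
def v : Fv := RatFunc.X

/-- The quantum integer `[i] = (v^i - v^{-i})/(v - v^{-1})`. -/
def qInt (i : ℕ) : Fv := (v ^ i - v⁻¹ ^ i) / (v - v⁻¹)

/-- The quantum factorial `[a]! = ∏_{i=1}^{a} [i]`. -/
def qFact (a : ℕ) : Fv := ∏ i ∈ range a, qInt (i + 1)

/-- The quantum binomial coefficient `[a choose b] = [a]!/([b]![a-b]!)`. -/
def qBin (a b : ℕ) : Fv := qFact a / (qFact b * qFact (a - b))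

/-- The Chebyshev-type basis `e_m` of `ℚ(v)[z]`: `e_0 = 1`, `e_1 = z`,
`z e_m = e_{m+1} + e_{m-1}`. -/
def cheb : ℕ → Polynomial Fv
  | 0 => 1
  | 1 => X
  | (n + 2) => X * cheb (n + 1) - cheb n

/-- `R_k(z) = ∏_{i=0}^{k-1} (z - λ_{2i})` where `λ_i = -v^{i+1} - v^{-i-1}`,
i.e. `R_k(z) = ∏_{i=0}^{k-1} (z + v^{2i+1} + v^{-(2i+1)})`. -/
def Rk (k : ℕ) : Polynomial Fv :=
  ∏ i ∈ range k, (X - C (-(v ^ (2 * i + 1)) - v⁻¹ ^ (2 * i + 1)))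


section Aux

lemma v_pow_ne_one (s : ℕ) (hs : 1 ≤ s) : v ^ s ≠ 1 := by
  intro h
  have hX : (Polynomial.X : Polynomial ℚ) ^ s = 1 := by
    apply IsFractionRing.injective (Polynomial ℚ) (RatFunc ℚ)
    simpa [v, RatFunc.algebraMap_X, map_pow] using h
  have := congrArg Polynomial.natDegree hX
  simp [Polynomial.natDegree_X_pow] at this
  omega

lemma hv : (v : Fv) ≠ 0 := RatFunc.X_ne_zero

lemma hvv : v - v⁻¹ ≠ 0 := by
  rw [sub_ne_zero]
  intro h
  apply v_pow_ne_one 2 (by norm_num)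
  rw [pow_two]; nth_rewrite 2 [h]
  exact mul_inv_cancel₀ hv

lemma qInt_ne_zero (m : ℕ) : qInt (m + 1) ≠ 0 := by
  rw [qInt, div_ne_zero_iff]
  refine ⟨?_, hvv⟩
  rw [sub_ne_zero]
  intro h
  apply v_pow_ne_one (2 * (m + 1)) (by omega)
  have : v ^ (m+1) * v⁻¹ ^ (m+1) = 1 := by
    rw [← mul_inv_cancel₀ (pow_ne_zero (m+1) hv)]
    simp [inv_pow]
  calc v ^ (2*(m+1)) = v ^ (m+1) * v ^ (m+1) := by ring
    _ = 1 := by rw [h] at this ⊢; exact this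

lemma hv1 : v * v⁻¹ = 1 := mul_inv_cancel₀ hv
lemma hvp (p : ℕ) : v ^ p * v⁻¹ ^ p = 1 := by
  rw [← mul_pow, hv1, one_pow]
lemma hvv1 : (v - v⁻¹) * (v - v⁻¹)⁻¹ = 1 := mul_inv_cancel₀ hvv

lemma ring_core {K : Type*} [CommRing K] (u w U W Y Z : K)
    (h1 : u*w = 1) (h2 : U*W = 1) (h3 : Y*Z = 1) :
    (u^3*U*Y - w^3*W*Z)*(u^2*U*Y - w^2*W*Z) + (u*U - w*W)*(U-W)
        - (u^2*Y - w^2*Z)*(u*Y - w*Z)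
      = (u^2*Y + w^2*Z)*(u^2*U*Y - w^2*W*Z)*(u*U - w*W) := by
  linear_combination
    (w*Y*Z - w*W^2*Y*Z + w^3*U*W*Z^2 + u*Y*Z - u*U^2*Y*Z - u*w^2*W^2*Y*Z
      - u^2*w*U^2*Y*Z + u^3*U*W*Y^2) * h1
    + (-w + w^3*Z^2 - u + u^3*Y^2) * h2 + (w - w*W^2 + u - u*U^2) * h3

lemma qInt_core (p q : ℕ) :
    qInt (p+q+3) * qInt (p+q+2) + qInt (p+1) * qInt p - qInt (q+2) * qInt (q+1)
      = (v^(q+2) + v⁻¹^(q+2)) * qInt (p+q+2) * qInt (p+1) := by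
  have h := ring_core v v⁻¹ (v^p) (v⁻¹^p) (v^q) (v⁻¹^q) hv1 (hvp p) (hvp q)
  simp only [qInt]
  linear_combination (v - v⁻¹)⁻¹ * (v - v⁻¹)⁻¹ * h

lemma qInt_rec (s : ℕ) : qInt (s+2) = (v + v⁻¹) * qInt (s+1) - qInt s := by
  simp only [qInt]
  linear_combination (-(v - v⁻¹)⁻¹ * (v^s - v⁻¹^s)) * hv1

lemma qInt_step (s : ℕ) : qInt (s+2) = qInt s + v^(s+1) + v⁻¹^(s+1) := by
  simp only [qInt]
  linear_combination (v - v⁻¹)⁻¹ * (v^s - v⁻¹^s) * hv1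
    + (v*v^s + v⁻¹*v⁻¹^s) * hvv1

lemma qInt_nz (m : ℕ) (hm : 1 ≤ m) : qInt m ≠ 0 := by
  obtain ⟨s, rfl⟩ : ∃ s, m = s + 1 := ⟨m - 1, by omega⟩
  exact qInt_ne_zero s

lemma qInt_one : qInt 1 = 1 := by
  simp only [qInt, pow_one]; exact div_self hvv

lemma qInt_zero : qInt 0 = 0 := by simp [qInt]

lemma qFact_succ (s : ℕ) : qFact (s + 1) = qFact s * qInt (s + 1) :=
  Finset.prod_range_succ _ _

lemma qFact_zero : qFact 0 = 1 := Finset.prod_range_zero _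

lemma qFact_ne_zero : ∀ a : ℕ, qFact a ≠ 0
  | 0 => by rw [qFact_zero]; exact one_ne_zero
  | (a+1) => by rw [qFact_succ]; exact mul_ne_zero (qFact_ne_zero a) (qInt_ne_zero a)

lemma qBin_zero (a : ℕ) : qBin a 0 = 1 := by
  rw [qBin, qFact_zero, Nat.sub_zero, one_mul, div_self (qFact_ne_zero a)]

lemma qFact_one : qFact 1 = 1 := by rw [qFact_succ, qFact_zero, qInt_one, one_mul]

lemma qBin_one (t : ℕ) : qBin (t+1) 1 = qInt (t+1) := by
  rw [qBin, qFact_one, one_mul, show t+1-1 = t from rfl, qFact_succ,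
    mul_comm (qFact t) (qInt (t+1)), mul_div_assoc, div_self (qFact_ne_zero t), mul_one]

lemma qBin_last (t : ℕ) : qBin (t+1) t = qInt (t+1) := by
  rw [qBin, show t+1-t = 1 from by omega, qFact_one, mul_one, qFact_succ,
    mul_comm (qFact t) (qInt (t+1)), mul_div_assoc, div_self (qFact_ne_zero t), mul_one]

lemma qBin_i (a b : ℕ) :
    qBin (a+b+1) (b+1) = qBin (a+b) b * qInt (a+b+1) / qInt (b+1) := by
  rw [eq_div_iff (qInt_ne_zero b), qBin, qBin, show a+b+1-(b+1) = a from by omega,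
    show a+b-b = a from by omega, qFact_succ (a+b), qFact_succ b,
    div_mul_eq_mul_div, div_mul_eq_mul_div,
    div_eq_div_iff (mul_ne_zero (mul_ne_zero (qFact_ne_zero b) (qInt_ne_zero b)) (qFact_ne_zero a))
      (mul_ne_zero (qFact_ne_zero b) (qFact_ne_zero a))]
  ring

lemma qBin_iii (a b : ℕ) :
    qBin (a+b+1) (b+1) = qBin (a+b+1) b * qInt (a+1) / qInt (b+1) := by
  rw [eq_div_iff (qInt_ne_zero b), qBin, qBin, show a+b+1-(b+1) = a from by omega,
    show a+b+1-b = a+1 from by omega, qFact_succ b, qFact_succ a,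
    div_mul_eq_mul_div, div_mul_eq_mul_div,
    div_eq_div_iff (mul_ne_zero (mul_ne_zero (qFact_ne_zero b) (qInt_ne_zero b)) (qFact_ne_zero a))
      (mul_ne_zero (qFact_ne_zero b) (mul_ne_zero (qFact_ne_zero a) (qInt_ne_zero a)))]
  ring

lemma L1 (j k : ℕ) :
    qBin (2*k+j+5) (j+2) + qBin (2*k+j+3) j - qBin (2*k+j+3) (j+2)
      = (v^(2*k+3) + v⁻¹^(2*k+3)) * qBin (2*k+j+4) (j+1) := by
  have E4 : qBin (2*k+j+4) (j+1) = qBin (2*k+j+3) j * qInt (2*k+j+4) / qInt (j+1) := by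
    have h := qBin_i (2*k+3) j
    simpa only [show 2*k+3+j+1 = 2*k+j+4 from by omega, show 2*k+3+j = 2*k+j+3 from by omega] using h
  have E1 : qBin (2*k+j+5) (j+2) = qBin (2*k+j+4) (j+1) * qInt (2*k+j+5) / qInt (j+2) := by
    have h := qBin_i (2*k+3) (j+1)
    simpa only [show 2*k+3+(j+1)+1 = 2*k+j+5 from by omega, show 2*k+3+(j+1) = 2*k+j+4 from by omega,
      show j+1+1 = j+2 from by omega] using h
  have E3a : qBin (2*k+j+3) (j+1) = qBin (2*k+j+3) j * qInt (2*k+3) / qInt (j+1) := by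
    have h := qBin_iii (2*k+2) j
    simpa only [show 2*k+2+j+1 = 2*k+j+3 from by omega, show 2*k+2+1 = 2*k+3 from by omega] using h
  have E3 : qBin (2*k+j+3) (j+2) = qBin (2*k+j+3) (j+1) * qInt (2*k+2) / qInt (j+2) := by
    have h := qBin_iii (2*k+1) (j+1)
    simpa only [show 2*k+1+(j+1)+1 = 2*k+j+3 from by omega, show 2*k+1+1 = 2*k+2 from by omega,
      show j+1+1 = j+2 from by omega] using h
  have hc := qInt_core (j+1) (2*k+1)
  simp only [show j+1+(2*k+1)+3 = 2*k+j+5 from by omega, show j+1+(2*k+1)+2 = 2*k+j+4 from by omega,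
    show j+1+1 = j+2 from by omega, show 2*k+1+2 = 2*k+3 from by omega,
    show 2*k+1+1 = 2*k+2 from by omega] at hc
  rw [E1, E4, E3, E3a]
  have h1 : qInt (j+1) ≠ 0 := qInt_ne_zero j
  have h2 : qInt (j+2) ≠ 0 := by
    have := qInt_ne_zero (j+1); simpa [show j+1+1 = j+2 from by omega] using this
  have ha : qInt (j+1) * (qInt (j+1))⁻¹ = 1 := mul_inv_cancel₀ h1
  have hb : qInt (j+2) * (qInt (j+2))⁻¹ = 1 := mul_inv_cancel₀ h2
  linear_combination (qBin (2*k+j+3) j * (qInt (j+1))⁻¹ * (qInt (j+2))⁻¹) * hc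
    - qBin (2*k+j+3) j * qInt (j+2) * (qInt (j+2))⁻¹ * ha - qBin (2*k+j+3) j * hb
    + qBin (2*k+j+3) j * qInt (2*k+j+4) * (qInt (j+1))⁻¹ * (v^(2*k+3) + v⁻¹^(2*k+3)) * hb

def mu (k : ℕ) : Fv := v^(2*k+1) + v⁻¹^(2*k+1)

def cc (n k : ℕ) : Polynomial Fv := (-1)^(n-1-k) * C (qBin (n+k) (n-1-k))

def Sk (n : ℕ) : Polynomial Fv := ∑ k ∈ range n, cc n k * Rk k

lemma Rk_zero : Rk 0 = 1 := Finset.prod_range_zero _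

lemma X_mul_Rk (k : ℕ) : X * Rk k = Rk (k+1) - C (mu k) * Rk k := by
  rw [show Rk (k+1) = Rk k * (X - C (-(v ^ (2*k+1)) - v⁻¹ ^ (2*k+1))) from
      Finset.prod_range_succ _ _]
  rw [mu, map_sub, map_neg, map_add]
  ring

lemma hB (m : ℕ) : cc (m+3) (m+1) = cc (m+2) m - cc (m+2) (m+1) * C (mu (m+1)) := by
  have e1 : qBin (m+3+(m+1)) 1 = qInt (2*m+4) := by
    rw [show m+3+(m+1) = 2*m+3+1 from by omega, qBin_one, show 2*m+3+1 = 2*m+4 from by omega]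
  have e2 : qBin (m+2+m) 1 = qInt (2*m+2) := by
    rw [show m+2+m = 2*m+1+1 from by omega, qBin_one, show 2*m+1+1 = 2*m+2 from by omega]
  have e3 : qBin (m+2+(m+1)) 0 = 1 := qBin_zero _
  have hs : qInt (2*m+4) = qInt (2*m+2) + v^(2*m+3) + v⁻¹^(2*m+3) := by
    have h := qInt_step (2*m+2)
    simpa only [show 2*m+2+2 = 2*m+4 from by omega, show 2*m+2+1 = 2*m+3 from by omega] using h
  simp only [cc, show m+3-1-(m+1) = 1 from by omega, show m+2-1-m = 1 from by omega,
    show m+2-1-(m+1) = 0 from by omega, e1, e2, e3, pow_one, pow_zero, one_mul, map_one,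
    mu, show 2*(m+1)+1 = 2*m+3 from by omega, hs]
  simp only [map_add]
  ring

lemma hC (m : ℕ) : cc (m+3) (m+2) = cc (m+2) (m+1) := by
  simp only [cc, show m+3-1-(m+2) = 0 from by omega, show m+2-1-(m+1) = 0 from by omega,
    pow_zero, one_mul, qBin_zero]

lemma hD (m : ℕ) : cc (m+3) 0 = -(cc (m+2) 0 * C (mu 0)) - cc (m+1) 0 := by
  have hr : qInt (m+3) = (v + v⁻¹) * qInt (m+2) - qInt (m+1) := by
    have h := qInt_rec (m+1)
    simpa only [show m+1+2 = m+3 from by omega, show m+1+1 = m+2 from by omega] using h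
  have hm0 : mu 0 = v + v⁻¹ := by simp [mu]
  simp only [cc, Nat.sub_zero, Nat.add_zero, show m+3-1 = m+2 from by omega,
    show m+2-1 = m+1 from by omega, show m+1-1 = m from by omega]
  rw [show qBin (m+3) (m+2) = qInt (m+3) from by
        rw [show m+3 = m+2+1 from by omega]; exact qBin_last (m+2),
      show qBin (m+2) (m+1) = qInt (m+2) from by
        rw [show m+2 = m+1+1 from by omega]; exact qBin_last (m+1),
      qBin_last m, hr, hm0, map_sub, map_mul, map_add]
  ring

lemma hA (m k : ℕ) (hk : k < m) :
    cc (m+3) (k+1) * Rk (k+1)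
      = cc (m+2) k * Rk (k+1) - cc (m+2) (k+1) * C (mu (k+1)) * Rk (k+1)
        - cc (m+1) (k+1) * Rk (k+1) := by
  obtain ⟨j, hj⟩ : ∃ j, m = k + j + 1 := ⟨m - k - 1, by omega⟩
  subst hj
  have h : cc (k+j+1+3) (k+1)
      = cc (k+j+1+2) k - cc (k+j+1+2) (k+1) * C (mu (k+1)) - cc (k+j+1+1) (k+1) := by
    have l := L1 j k
    simp only [cc, mu, show (k+j+1+3)-1-(k+1) = j+2 from by omega,
      show (k+j+1+2)-1-k = j+2 from by omega,
      show (k+j+1+2)-1-(k+1) = j+1 from by omega,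
      show (k+j+1+1)-1-(k+1) = j from by omega,
      show k+j+1+3+(k+1) = 2*k+j+5 from by omega,
      show k+j+1+2+k = 2*k+j+3 from by omega,
      show k+j+1+2+(k+1) = 2*k+j+4 from by omega,
      show k+j+1+1+(k+1) = 2*k+j+3 from by omega,
      show 2*(k+1)+1 = 2*k+3 from by omega]
    have lC := congrArg C l
    simp only [map_add, map_sub, map_mul] at lC
    rw [map_add]
    linear_combination ((-1 : Polynomial Fv)^j) * lC
  rw [h]; ring

lemma step_s13 (m : ℕ) : Sk (m+3) = X * Sk (m+2) - Sk (m+1) := by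
  rw [Sk, Sk, Sk, Finset.mul_sum]
  have h1 : ∀ x ∈ range (m+2), X * (cc (m+2) x * Rk x)
      = cc (m+2) x * Rk (x+1) - cc (m+2) x * C (mu x) * Rk x := by
    intro x _
    rw [mul_left_comm, X_mul_Rk]; ring
  rw [Finset.sum_congr rfl h1, Finset.sum_sub_distrib]
  rw [Finset.sum_range_succ' (fun x => cc (m+3) x * Rk x) (m+2)]
  rw [Finset.sum_range_succ' (fun x => cc (m+2) x * C (mu x) * Rk x) (m+1)]
  rw [Finset.sum_range_succ' (fun x => cc (m+1) x * Rk x) m]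
  rw [Finset.sum_range_succ (fun x => cc (m+3) (x+1) * Rk (x+1)) (m+1)]
  rw [Finset.sum_range_succ (fun x => cc (m+3) (x+1) * Rk (x+1)) m]
  rw [Finset.sum_range_succ (fun x => cc (m+2) x * Rk (x+1)) (m+1)]
  rw [Finset.sum_range_succ (fun x => cc (m+2) x * Rk (x+1)) m]
  rw [Finset.sum_range_succ (fun x => cc (m+2) (x+1) * C (mu (x+1)) * Rk (x+1)) m]
  have hsum : ∑ x ∈ range m, cc (m+3) (x+1) * Rk (x+1)
      = ∑ x ∈ range m, (cc (m+2) x * Rk (x+1) - cc (m+2) (x+1) * C (mu (x+1)) * Rk (x+1)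
          - cc (m+1) (x+1) * Rk (x+1)) :=
    Finset.sum_congr rfl (fun x hx => hA m x (mem_range.mp hx))
  rw [hsum, Finset.sum_sub_distrib, Finset.sum_sub_distrib, Rk_zero]
  have b := hB m
  have c := hC m
  have d := hD m
  linear_combination Rk (m+1) * b + Rk (m+2) * c + d

lemma qInt_two : qInt 2 = v + v⁻¹ := by
  have h := qInt_rec 0
  simpa [qInt_one, qInt_zero] using h

lemma base0 : cheb 0 = Sk 1 := by
  rw [show cheb 0 = 1 from rfl, Sk, Finset.sum_range_one, Rk_zero, cc]
  norm_num [qBin_zero]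

lemma base1 : cheb 1 = Sk 2 := by
  rw [show cheb 1 = (X : Polynomial Fv) from rfl, Sk, Finset.sum_range_succ,
    Finset.sum_range_one, Rk_zero]
  have h0 : cc 2 0 = -C (v + v⁻¹) := by
    simp only [cc, show 2-1-0 = 1 from rfl, show 2+0 = 1+1 from rfl, qBin_one, pow_one]
    rw [show qInt (1+1) = qInt 2 from rfl, qInt_two]
    ring
  have h1 : cc 2 1 = 1 := by
    simp only [cc, show 2-1-1 = 0 from rfl, pow_zero, qBin_zero, map_one, one_mul]
  have hR1 : Rk 1 = X + C (v + v⁻¹) := by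
    rw [Rk, Finset.prod_range_one]
    rw [map_sub, map_neg, map_add]
    norm_num
    ring
  rw [h0, h1, hR1]
  ring

lemma chebS : ∀ m, cheb m = Sk (m+1) := by
  have key : ∀ m, cheb m = Sk (m+1) ∧ cheb (m+1) = Sk (m+2) := by
    intro m
    induction m with
    | zero => exact ⟨base0, base1⟩
    | succ n ih =>
      refine ⟨ih.2, ?_⟩
      rw [show cheb (n+2) = X * cheb (n+1) - cheb n from rfl, ih.1, ih.2, ← step_s13 n]
  exact fun m => (key m).1

end Aux

/-- The basis change (formula (13) of the Appendix): for `n ≥ 1`,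
`e_{n-1} = ∑_{k=0}^{n-1} (-1)^{n-1-k} [n+k choose n-1-k] R_k` in `ℚ(v)[z]`. -/
theorem cheb_eq_sum_Rk (n : ℕ) (hn : 1 ≤ n) :
    cheb (n - 1)
      = ∑ k ∈ range n, (-1 : Polynomial Fv) ^ (n - 1 - k) * C (qBin (n + k) (n - 1 - k)) * Rk k := by
  obtain ⟨m, rfl⟩ : ∃ m, n = m + 1 := ⟨n - 1, by omega⟩
  have h := chebS m
  rw [Sk] at h
  simpa [cc] using h

end
end

section
/- Let r be a positive integer divisible by 4 and q a primitive r-th root of unity in ℂ, with v a fixed square root of q. If r = 4p with p odd, then for any integer a, ∑_{λ even, 0≤λ<r} v^{λ^2-1} q^{aλ} = 0 whenever a is even, and ∑_{λ odd, 0≤λ<r} v^{λ^2-1} q^{aλ} = 0 whenever a is odd. -/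
open Finset

private lemma neg_one_zpow_two_mul (m : ℤ) : ((-1 : ℂ)) ^ (2 * m) = 1 := by
  rw [zpow_mul]; norm_num

private lemma neg_one_zpow_odd (m : ℤ) : ((-1 : ℂ)) ^ (2 * m + 1) = -1 := by
  rw [zpow_add₀ (by norm_num : (-1 : ℂ) ≠ 0), neg_one_zpow_two_mul]; norm_num

private lemma shift_sum (g : ℕ → ℂ) (n : ℕ) (hg : ∀ k, g (k + n) = g k) :
    ∀ s : ℕ, ∑ k ∈ range n, g (k + s) = ∑ k ∈ range n, g k := by
  have one : ∀ h : ℕ → ℂ, (∀ k, h (k + n) = h k) →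
      ∑ k ∈ range n, h (k + 1) = ∑ k ∈ range n, h k := by
    intro h hh
    have h1 : ∑ k ∈ range (n + 1), h k = (∑ k ∈ range n, h (k + 1)) + h 0 :=
      Finset.sum_range_succ' h n
    have h2 : ∑ k ∈ range (n + 1), h k = (∑ k ∈ range n, h k) + h n :=
      Finset.sum_range_succ h n
    have h3 : h n = h 0 := by simpa using hh 0
    rw [h3] at h2
    have := h1.symm.trans h2
    exact add_right_cancel this
  intro s
  induction s with
  | zero => simp
  | succ s ih =>
      have : ∑ k ∈ range n, g (k + (s + 1)) = ∑ k ∈ range n, g ((k + 1) + s) := by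
        apply Finset.sum_congr rfl; intro k _; ring_nf
      rw [this]
      have := one (fun k => g (k + s)) (fun k => by
        simpa [Nat.add_right_comm] using hg (k + s))
      simpa [ih] using this.trans ih

/-- Parity vanishing of the Gauss-type sums `∑ v^{λ²-1} q^{aλ}` for `r = 4p`, `p` odd:
the sum over even `λ` vanishes when `a` is even, and the sum over odd `λ` vanishes
when `a` is odd. -/
theorem gauss_sum_parity_vanishing (p : ℕ) (hp : Odd p) (r : ℕ) (hr : r = 4 * p)
    (q : ℂ) (hq : IsPrimitiveRoot q r) (v : ℂ) (hv : v ^ 2 = q) (a : ℤ) :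
    (Even a →
        ∑ lam ∈ (range r).filter (fun lam => Even lam),
          v ^ ((lam : ℤ) ^ 2 - 1) * q ^ (a * (lam : ℤ)) = 0) ∧
      (Odd a →
        ∑ lam ∈ (range r).filter (fun lam => Odd lam),
          v ^ ((lam : ℤ) ^ 2 - 1) * q ^ (a * (lam : ℤ)) = 0) := by
  have hp0 : 0 < p := hp.pos
  have hr0 : r ≠ 0 := by omega
  have hq0 : q ≠ 0 := by
    intro h
    have := hq.pow_eq_one
    rw [h] at this
    simp [hr0] at this
  have hv0 : v ≠ 0 := by
    intro h; apply hq0; rw [← hv, h]; ring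
  -- q ^ (2p) = -1
  have hq2p : q ^ (2 * p) = -1 := by
    have hsq : q ^ (2 * p) * q ^ (2 * p) = 1 := by
      rw [← pow_add]
      have : 2 * p + 2 * p = r := by omega
      rw [this, hq.pow_eq_one]
    rcases mul_self_eq_one_iff.mp hsq with h | h
    · exfalso
      have hdvd := (hq.pow_eq_one_iff_dvd (2 * p)).mp h
      have := Nat.le_of_dvd (by omega) hdvd
      omega
    · exact h
  have hq2pz : q ^ ((2 * p : ℕ) : ℤ) = -1 := by
    rw [zpow_natCast]; exact hq2p
  set f : ℤ → ℂ := fun lam => v ^ (lam ^ 2 - 1) * q ^ (a * lam) with hf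
  -- key shift formula
  have hshift : ∀ lam : ℤ, f (lam + 2 * p) = (-1) ^ (lam + p + a) * f lam := by
    intro lam
    have e1 : (lam + 2 * p) ^ 2 - 1 = (lam ^ 2 - 1) + 2 * (2 * p * (lam + p)) := by ring
    have e2 : a * (lam + 2 * p) = a * lam + (2 * p) * a := by ring
    have hv4 : v ^ (2 * (2 * (p : ℤ) * (lam + p))) = (-1) ^ (lam + p) := by
      rw [zpow_mul]
      have : v ^ (2 : ℤ) = q := by rw [zpow_two, ← sq, hv]
      rw [this]
      rw [show (2 * (p : ℤ) * (lam + p)) = ((2 * p : ℕ) : ℤ) * (lam + p) by push_cast; ring,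
        zpow_mul, hq2pz]
    have hqa : q ^ ((2 * (p : ℤ)) * a) = (-1) ^ a := by
      rw [show (2 * (p : ℤ)) * a = ((2 * p : ℕ) : ℤ) * a by push_cast; ring,
        zpow_mul, hq2pz]
    simp only [hf]
    rw [e1, e2, zpow_add₀ hv0, zpow_add₀ hq0, hv4, hqa]
    have hsplit : ((-1 : ℂ)) ^ (lam + ↑p + a) = (-1) ^ (lam + ↑p) * (-1) ^ a :=
      zpow_add₀ (by norm_num : (-1 : ℂ) ≠ 0) _ _
    rw [hsplit]
    ring
  -- periodicity of f
  have hper : ∀ lam : ℤ, f (lam + 4 * p) = f lam := by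
    intro lam
    have := hshift (lam + 2 * p)
    rw [hshift lam] at this
    have e : lam + 2 * p + 2 * p = lam + 4 * p := by ring
    rw [e] at this
    rw [this]
    have h4 : ((-1 : ℂ)) ^ (lam + 2 * (p : ℤ) + p + a) * (-1) ^ (lam + p + a) = 1 := by
      rw [← zpow_add₀ (by norm_num : (-1 : ℂ) ≠ 0),
        show (lam + 2 * (p : ℤ) + p + a) + (lam + p + a) = 2 * (lam + a + 2 * p) by ring,
        neg_one_zpow_two_mul]
    calc ((-1 : ℂ)) ^ (lam + 2 * (p : ℤ) + p + a) * ((-1) ^ (lam + p + a) * f lam)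
        = (((-1 : ℂ)) ^ (lam + 2 * (p : ℤ) + p + a) * (-1) ^ (lam + p + a)) * f lam := by ring
      _ = f lam := by rw [h4]; ring
  -- the two parity sums as sums over range (2p)
  have heven : ∑ lam ∈ (range r).filter (fun lam => Even lam),
      v ^ ((lam : ℤ) ^ 2 - 1) * q ^ (a * (lam : ℤ)) = ∑ k ∈ range (2 * p), f (2 * k) := by
    apply Finset.sum_nbij' (fun lam => lam / 2) (fun k => 2 * k)
    · intro lam hlam
      simp only [mem_filter, mem_range] at hlam
      obtain ⟨h1, c, hc⟩ := hlam
      simp only [mem_range]; omega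
    · intro k hk
      simp only [mem_range] at hk
      simp only [mem_filter, mem_range]
      exact ⟨by omega, ⟨k, by omega⟩⟩
    · intro lam hlam
      simp only [mem_filter, mem_range] at hlam
      obtain ⟨h1, c, hc⟩ := hlam; omega
    · intro k _; omega
    · intro lam hlam
      simp only [mem_filter, mem_range] at hlam
      obtain ⟨h1, c, hc⟩ := hlam
      have hl : (lam : ℤ) = 2 * ((lam / 2 : ℕ) : ℤ) := by omega
      simp only [hf]
      rw [hl]
  have hodd : ∑ lam ∈ (range r).filter (fun lam => Odd lam),
      v ^ ((lam : ℤ) ^ 2 - 1) * q ^ (a * (lam : ℤ)) = ∑ k ∈ range (2 * p), f (2 * k + 1) := by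
    apply Finset.sum_nbij' (fun lam => lam / 2) (fun k => 2 * k + 1)
    · intro lam hlam
      simp only [mem_filter, mem_range] at hlam
      obtain ⟨h1, c, hc⟩ := hlam
      simp only [mem_range]; omega
    · intro k hk
      simp only [mem_range] at hk
      simp only [mem_filter, mem_range]
      exact ⟨by omega, ⟨k, by omega⟩⟩
    · intro lam hlam
      simp only [mem_filter, mem_range] at hlam
      obtain ⟨h1, c, hc⟩ := hlam; omega
    · intro k _; omega
    · intro lam hlam
      simp only [mem_filter, mem_range] at hlam
      obtain ⟨h1, c, hc⟩ := hlam
      have hl : (lam : ℤ) = 2 * ((lam / 2 : ℕ) : ℤ) + 1 := by omega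
      simp only [hf]
      rw [hl]
  constructor
  · intro ha
    rw [heven]
    set g : ℕ → ℂ := fun k => f (2 * k) with hg
    have hgper : ∀ k, g (k + 2 * p) = g k := by
      intro k
      simp only [hg]
      have := hper (2 * k)
      rw [← this]
      congr 1; push_cast; ring
    have key : ∀ k : ℕ, g (k + p) = - g k := by
      intro k
      simp only [hg]
      have := hshift (2 * k)
      have e : (2 * (k : ℤ)) + 2 * p = 2 * ((k : ℕ) + p : ℕ) := by push_cast; ring
      rw [e] at this
      rw [this]
      have : ((-1 : ℂ)) ^ (2 * (k : ℤ) + p + a) = -1 := by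
        obtain ⟨c, hc⟩ := ha
        obtain ⟨d, hd⟩ := hp
        rw [show 2 * (k : ℤ) + p + a = 2 * (k + d + c) + 1 by push_cast [hd]; omega]
        exact neg_one_zpow_odd _
      rw [this]; ring
    have h1 : ∑ k ∈ range (2 * p), g (k + p) = ∑ k ∈ range (2 * p), g k :=
      shift_sum g (2 * p) hgper p
    have h2 : ∑ k ∈ range (2 * p), g (k + p) = - ∑ k ∈ range (2 * p), g k := by
      rw [← Finset.sum_neg_distrib]
      exact Finset.sum_congr rfl fun k _ => key k
    have hSS := h1.symm.trans h2
    have h0 : (2 : ℂ) * ∑ k ∈ range (2 * p), g k = 0 := by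
      rw [two_mul]
      nth_rewrite 1 [hSS]
      ring
    have h2ne : (2 : ℂ) ≠ 0 := by norm_num
    exact (mul_eq_zero.mp h0).resolve_left h2ne
  · intro ha
    rw [hodd]
    set g : ℕ → ℂ := fun k => f (2 * k + 1) with hg
    have hgper : ∀ k, g (k + 2 * p) = g k := by
      intro k
      simp only [hg]
      have := hper (2 * k + 1)
      rw [← this]
      congr 1; push_cast; ring
    have key : ∀ k : ℕ, g (k + p) = - g k := by
      intro k
      simp only [hg]
      have := hshift (2 * k + 1)
      have e : (2 * (k : ℤ) + 1) + 2 * p = 2 * ((k : ℕ) + p : ℕ) + 1 := by push_cast; ring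
      rw [e] at this
      rw [this]
      have : ((-1 : ℂ)) ^ (2 * (k : ℤ) + 1 + p + a) = -1 := by
        obtain ⟨c, hc⟩ := ha
        obtain ⟨d, hd⟩ := hp
        rw [show 2 * (k : ℤ) + 1 + p + a = 2 * (k + 1 + d + c) + 1 by push_cast [hd, hc]; omega]
        exact neg_one_zpow_odd _
      rw [this]; ring
    have h1 : ∑ k ∈ range (2 * p), g (k + p) = ∑ k ∈ range (2 * p), g k :=
      shift_sum g (2 * p) hgper p
    have h2 : ∑ k ∈ range (2 * p), g (k + p) = - ∑ k ∈ range (2 * p), g k := by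
      rw [← Finset.sum_neg_distrib]
      exact Finset.sum_congr rfl fun k _ => key k
    have hSS := h1.symm.trans h2
    have h0 : (2 : ℂ) * ∑ k ∈ range (2 * p), g k = 0 := by
      rw [two_mul]
      nth_rewrite 1 [hSS]
      ring
    have h2ne : (2 : ℂ) ≠ 0 := by norm_num
    exact (mul_eq_zero.mp h0).resolve_left h2ne
end

section
/- Let b = 2^t c and r = 2^s d with c, d odd, gcd(c,d) = 1, and s ≥ t+2. Let q be a primitive r-th root of unity and fix a compatible 4th root of q so that q^{1/4} makes sense. Then ∑_{λ=0, λ odd}^{r-1} q^{b(λ^2-1)/4} = 0, i.e., γ^1_{b,r} = 0. -/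
open Finset

/-- From the proof of Proposition 5.1: if `b = 2^t c`, `r = 2^s d` with `c, d` odd,
`gcd(c,d) = 1` and `s ≥ t + 2`, then the odd part of the Gauss sum vanishes:
`γ¹_{b,r} = ∑_{0 ≤ λ < r, λ odd} q^{b(λ²-1)/4} = 0`, where `q^{1/4} = ζ` is a fixed
primitive `4r`-th root of unity with `ζ⁴ = q`. -/
theorem gamma_odd_vanishes (t s : ℕ) (c : ℤ) (d : ℕ) (hc : Odd c) (hd : Odd d)
    (hcd : IsCoprime c (d : ℤ)) (hs : t + 2 ≤ s)
    (b : ℤ) (hb : b = 2 ^ t * c) (r : ℕ) (hr : r = 2 ^ s * d)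
    (ζ : ℂ) (hζ : IsPrimitiveRoot ζ (4 * r)) :
    ∑ lam ∈ (range r).filter (fun lam => Odd lam),
        ζ ^ (b * ((lam : ℤ) ^ 2 - 1)) = 0 := by
  have hd1 : 1 ≤ d := hd.pos
  have hr0 : 0 < r := by rw [hr]; positivity
  have hζ0 : ζ ≠ 0 := hζ.ne_zero (by positivity)
  set H : ℕ := 2 ^ (s - t) * d with hHdef
  have hts : t ≤ s := by omega
  have hH4 : 4 ∣ H := by
    refine Dvd.dvd.mul_right ?_ d
    have : (2:ℕ)^2 ∣ 2^(s-t) := pow_dvd_pow 2 (by omega)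
    simpa using this
  have hr4 : 4 ∣ r := by
    rw [hr]
    refine Dvd.dvd.mul_right ?_ d
    have : (2:ℕ)^2 ∣ 2^s := pow_dvd_pow 2 (by omega)
    simpa using this
  have hHr : H ≤ r := by
    rw [hr, hHdef]
    exact Nat.mul_le_mul_right d (Nat.pow_le_pow_right (by norm_num) (by omega))
  have hbH : b * (H:ℤ) = c * (r:ℤ) := by
    rw [hb, hHdef, hr]
    push_cast
    rw [show (2:ℤ)^t * c * ((2:ℤ)^(s-t) * d) = (2^t * 2^(s-t)) * (c*d) by ring,
        ← pow_add, show t + (s - t) = s from by omega]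
    ring
  have h4r : ζ ^ ((4:ℤ) * r) = 1 := by
    have := hζ.pow_eq_one
    rw [show ((4:ℤ) * r) = ((4 * r : ℕ) : ℤ) by push_cast; ring, zpow_natCast]
    exact this
  have h2r : ζ ^ ((2:ℤ) * r) = -1 := by
    have hsq : ζ ^ ((2:ℤ)*r) * ζ ^ ((2:ℤ)*r) = 1 := by
      rw [← zpow_add₀ hζ0, show (2:ℤ)*r + 2*r = 4*r by ring]
      exact h4r
    rcases mul_self_eq_one_iff.mp hsq with h | h
    · exfalso
      have hne : ζ ^ ((2*r : ℕ)) ≠ 1 :=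
        hζ.pow_ne_one_of_pos_of_lt (by omega) (by omega)
      rw [show (2:ℤ)*r = ((2*r:ℕ):ℤ) by push_cast; ring, zpow_natCast] at h
      exact hne h
    · exact h
  have key : ∀ E1 E2 : ℤ, (4*(r:ℤ)) ∣ (E2 - E1 - 2*r) → ζ ^ E2 = -ζ ^ E1 := by
    rintro E1 E2 ⟨k, hk⟩
    have hE2 : E2 = E1 + 2*r + (4*r)*k := by linarith
    have h4rk : ζ ^ ((4*(r:ℤ))*k) = 1 := by
      rw [zpow_mul, h4r, one_zpow]
    rw [hE2, zpow_add₀ hζ0, zpow_add₀ hζ0, h2r, h4rk]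
    ring
  obtain ⟨u, hu⟩ := hH4
  obtain ⟨w, hw⟩ := hr4
  have hu' : (H:ℤ) = 4 * u := by exact_mod_cast hu
  have hw' : (r:ℤ) = 4 * w := by exact_mod_cast hw
  refine Finset.sum_involution
    (fun a _ => if a ≤ H then H - a else H + r - a) ?_ ?_ ?_ ?_
  · -- f a + f (g a) = 0
    intro a ha
    simp only [mem_filter, mem_range] at ha
    obtain ⟨har, haodd⟩ := ha
    obtain ⟨m, hm⟩ := hc
    obtain ⟨k, hk⟩ := haodd
    have hveq : c * (a:ℤ) + 1 = 2 * (2*m*k + m + k + 1) := by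
      rw [hm]; push_cast [hk]; ring
    set v : ℤ := 2*m*k + m + k + 1 with hv
    split_ifs with hle
    · have hcast : ((H - a : ℕ) : ℤ) = (H:ℤ) - a := by
        push_cast [Nat.cast_sub hle]; ring
      rw [hcast]
      have heq : b * (((H:ℤ)-a)^2 - 1) - b * ((a:ℤ)^2 - 1) - 2*r
          = c*r*H - 2*r*(c*(a:ℤ)+1) := by
        linear_combination ((H:ℤ) - 2*a) * hbH
      have hdvd : (4*(r:ℤ)) ∣ (b * (((H:ℤ)-a)^2 - 1) - b * ((a:ℤ)^2 - 1) - 2*r) := by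
        refine ⟨c*u - v, ?_⟩
        rw [heq]
        linear_combination (c*(r:ℤ)) * hu' - (2*(r:ℤ)) * hveq
      rw [key _ _ hdvd]
      ring
    · -- here H < a < r, which forces t ≥ 1
      push_neg at hle
      have ht1 : 1 ≤ t := by
        by_contra ht0
        have : t = 0 := by omega
        have : H = r := by rw [hHdef, hr, this, Nat.sub_zero]
        omega
      have hb2 : b = 2 * (2^(t-1) * c) := by
        rw [hb, show (2:ℤ)^t = 2^(t-1) * 2 from by
          rw [← pow_succ]; congr 1; omega]
        ring
      set b₀ : ℤ := 2^(t-1) * c with hb₀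
      have hcast : ((H + r - a : ℕ) : ℤ) = (H:ℤ) + r - a := by
        have : a ≤ H + r := by omega
        push_cast [Nat.cast_sub this]; ring
      rw [hcast]
      have heq : b * (((H:ℤ)+r-a)^2 - 1) - b * ((a:ℤ)^2 - 1) - 2*r
          = c*r*H + 2*c*r^2 + b*r^2 - 2*b*r*a - 2*r*(c*(a:ℤ)+1) := by
        linear_combination ((H:ℤ) + 2*r - 2*a) * hbH
      have hdvd : (4*(r:ℤ)) ∣
          (b * (((H:ℤ)+r-a)^2 - 1) - b * ((a:ℤ)^2 - 1) - 2*r) := by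
        refine ⟨c*u + 2*c*w + b*w - b₀*a - v, ?_⟩
        rw [heq]
        linear_combination (c*(r:ℤ)) * hu' + (2*c*(r:ℤ) + b*(r:ℤ)) * hw'
          - (2*(r:ℤ)*(a:ℤ)) * hb2 - (2*(r:ℤ)) * hveq
      rw [key _ _ hdvd]
      ring
  · -- g a ≠ a
    intro a ha _
    simp only [mem_filter, mem_range] at ha
    obtain ⟨har, k, hk⟩ := ha
    split_ifs <;> omega
  · -- g a ∈ s
    intro a ha
    simp only [mem_filter, mem_range] at ha ⊢
    obtain ⟨har, haodd⟩ := ha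
    obtain ⟨k, hk⟩ := haodd
    have hHe : Even H := ⟨2*u, by omega⟩
    split_ifs with hle
    · refine ⟨by omega, ?_⟩
      exact Nat.Even.sub_odd hle hHe ⟨k, by omega⟩
    · refine ⟨by omega, ?_⟩
      have : Even (H + r) := ⟨2*u + 2*w, by omega⟩
      exact Nat.Even.sub_odd (by omega) this ⟨k, by omega⟩
  · -- involution
    intro a ha
    simp only [mem_filter, mem_range] at ha
    split_ifs <;> omega
end

section
/- Let r = 2p with p odd, q a primitive r-th root of unity, v a primitive 4p-th root of unity with v^2 = q, and write v^{p^2} = ζ·i, ζ = ±1. Define γ^ε_{±2,r} = ∑_{0≤λ<r, λ≡ε mod 2} q^{±(λ^2-1)/2} = ∑_{λ≡ε} v^{±(λ^2-1)}. Then γ^1_{2,r} = ζ i · γ^0_{2,r} and γ^1_{-2,r} = -ζ i · γ^0_{-2,r}. -/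
open Finset

private lemma gamma_aux (p r : ℕ) (hp : Odd p) (hr : r = 2 * p) (v : ℂ) (hv0 : v ≠ 0)
    (key : ∀ a b : ℤ, ((4 * p : ℕ) : ℤ) ∣ (a - b) → v ^ a = v ^ b) (s : ℤ) :
    ∑ mu ∈ (range r).filter (fun lam => Odd lam), v ^ (s * ((mu : ℤ) ^ 2 - 1))
      = v ^ (s * (p : ℤ) ^ 2) *
        ∑ lam ∈ (range r).filter (fun lam => Even lam), v ^ (s * ((lam : ℤ) ^ 2 - 1)) := by
  have hp1 : 0 < p := hp.pos
  have hr0 : 0 < r := by omega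
  have h2r : 2 ∣ r := ⟨p, hr⟩
  rw [Finset.mul_sum]
  symm
  refine Finset.sum_nbij' (fun lam => (lam + p) % r) (fun mu => (mu + p) % r) ?_ ?_ ?_ ?_ ?_
  · intro a ha
    simp only [mem_filter, mem_range] at ha ⊢
    refine ⟨Nat.mod_lt _ hr0, ?_⟩
    rw [Nat.odd_iff, Nat.mod_mod_of_dvd _ h2r, ← Nat.odd_iff]
    exact ha.2.add_odd hp
  · intro a ha
    simp only [mem_filter, mem_range] at ha ⊢
    refine ⟨Nat.mod_lt _ hr0, ?_⟩
    rw [Nat.even_iff, Nat.mod_mod_of_dvd _ h2r, ← Nat.even_iff]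
    exact ha.2.add_odd hp
  · intro a ha
    simp only [mem_filter, mem_range] at ha
    show ((a + p) % r + p) % r = a
    rw [Nat.mod_add_mod, show a + p + p = a + r by omega, Nat.add_mod_right,
      Nat.mod_eq_of_lt ha.1]
  · intro a ha
    simp only [mem_filter, mem_range] at ha
    show ((a + p) % r + p) % r = a
    rw [Nat.mod_add_mod, show a + p + p = a + r by omega, Nat.add_mod_right,
      Nat.mod_eq_of_lt ha.1]
  · intro a ha
    simp only [mem_filter, mem_range] at ha
    obtain ⟨m, hm⟩ := ha.2
    rw [← zpow_add₀ hv0]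
    apply key
    set k : ℤ := ((a : ℤ) + p) / r with hk
    have hmu : (((a + p) % r : ℕ) : ℤ) = (a : ℤ) + p - r * k := by
      push_cast
      rw [Int.emod_def]
    rw [hmu]
    refine ⟨-(s * ((m : ℤ) - k * ((m : ℤ) + m + p) + p * k ^ 2)), ?_⟩
    have haz : (a : ℤ) = m + m := by exact_mod_cast hm
    have hrz : (r : ℤ) = 2 * p := by exact_mod_cast hr
    rw [haz, hrz]
    push_cast
    ring

/-- Lemma 4.5(a): with `r = 2p`, `p` odd, `q` a primitive `r`-th root of unity,
`v` a primitive `4p`-th root with `v² = q` and `v^{p²} = ζ·i` (`ζ = ±1`), the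
parity-restricted Gauss sums `γ^ε_{±2,r} = ∑_{0≤λ<r, λ≡ε (2)} v^{±(λ²-1)}` satisfy
`γ¹_{2,r} = ζ i γ⁰_{2,r}` and `γ¹_{-2,r} = -ζ i γ⁰_{-2,r}`. -/
theorem gamma_parity_relation (p : ℕ) (hp : Odd p) (r : ℕ) (hr : r = 2 * p)
    (q v : ℂ) (hv : IsPrimitiveRoot v (4 * p)) (hq : v ^ 2 = q)
    (hqprim : IsPrimitiveRoot q r)
    (ζ : ℂ) (hζ : ζ = 1 ∨ ζ = -1) (hvp : v ^ p ^ 2 = ζ * Complex.I) :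
    (∑ lam ∈ (range r).filter (fun lam => Odd lam), v ^ ((lam : ℤ) ^ 2 - 1)
        = ζ * Complex.I *
          ∑ lam ∈ (range r).filter (fun lam => Even lam), v ^ ((lam : ℤ) ^ 2 - 1)) ∧
      (∑ lam ∈ (range r).filter (fun lam => Odd lam), v ^ (-((lam : ℤ) ^ 2 - 1))
        = -(ζ * Complex.I) *
          ∑ lam ∈ (range r).filter (fun lam => Even lam), v ^ (-((lam : ℤ) ^ 2 - 1))) := by
  have hp1 : 0 < p := hp.pos
  have hv0 : v ≠ 0 := hv.ne_zero (by positivity)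
  have h4p : v ^ (4 * p) = 1 := hv.pow_eq_one
  have key : ∀ a b : ℤ, ((4 * p : ℕ) : ℤ) ∣ (a - b) → v ^ a = v ^ b := by
    intro a b ⟨k, hk⟩
    have h1 : v ^ a = v ^ b * v ^ (a - b) := by
      rw [← zpow_add₀ hv0]; ring_nf
    rw [h1, hk, zpow_mul, zpow_natCast, h4p, one_zpow, mul_one]
  have hvp' : v ^ ((p : ℤ) ^ 2) = ζ * Complex.I := by
    rw [show ((p : ℤ) ^ 2) = ((p ^ 2 : ℕ) : ℤ) by push_cast; ring, zpow_natCast, hvp]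
  have hζ2 : ζ * ζ = 1 := by rcases hζ with h | h <;> simp [h]
  have hvpneg : v ^ (-((p : ℤ) ^ 2)) = -(ζ * Complex.I) := by
    rw [zpow_neg, hvp']
    refine inv_eq_of_mul_eq_one_left ?_
    calc -(ζ * Complex.I) * (ζ * Complex.I) = -(ζ * ζ * (Complex.I * Complex.I)) := by ring
    _ = 1 := by rw [hζ2, Complex.I_mul_I]; ring
  constructor
  · have h := gamma_aux p r hp hr v hv0 key 1
    simp only [one_mul] at h
    rw [h, hvp']
  · have h := gamma_aux p r hp hr v hv0 key (-1)
    simp only [neg_one_mul] at h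
    rw [h, hvpneg]
end
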